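/- Consider a two-sender instance over a finite field F with parts P_1, P_2, P_{12}, side-information sets K_i, and eavesdropper set A with A_T = A ∩ P_T. Assume every interaction between distinct parts is fully participated: for every T ∈ {1, 2, {1,2}} and every i ∈ P_T, K_i ⊇ [m] \ P_T (each receiver knows all messages lying outside its own part). Suppose for each T there exists a matrix G_T ∈ F^{l_T×|P_T|} that is a valid index code for the sub-instance induced on P_T and weakly secure against A_T. Then there exists a valid weakly secure two-sender linear index code for the full instance of total length max{l_{12} + l_1, l_{12} + l_2, l_1 + l_2}. In particular l* ≤ max{l*_{12} + l*_1, l*_{12} + l*_2, l*_1 + l*_2}. -/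

import Mathlib

open Matrix Sum

attribute [local instance] Classical.propDecidable

noncomputable section

variable (F : Type*) [Field F] [Fintype F]

/-- The row space of a matrix: the span of its rows. -/
def rowSpace {ρ ι : Type*} (G : Matrix ρ ι F) : Submodule F (ι → F) :=
  Submodule.span F (Set.range fun r j => G r j)

/-- Weak security of the linear code `x ↦ G x` against an eavesdropper knowing `x j` for
`j ∈ A`: for every `i ∉ A` and every `u` supported in `A`, `u + e i` is not in the
row space of `G`. -/
def WeaklySecure {ρ ι : Type*} (G : Matrix ρ ι F) (A : Set ι) : Prop :=
  ∀ i ∉ A, ∀ u : ι → F, (∀ j, u j ≠ 0 → j ∈ A) →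
    u + Pi.single i (1 : F) ∉ rowSpace F G

/-- `G` is a valid index code for side-information sets `K`: every receiver `i` can
decode `x i` from the codeword `G.mulVec x` and its side information `x|_{K i}`. -/
def ValidCode {ρ ι : Type*} [Fintype ι] (K : ι → Set ι) (G : Matrix ρ ι F) : Prop :=
  ∀ i : ι, ∃ D : (ρ → F) → (↥(K i) → F) → F,
    ∀ x : ι → F, D (G.mulVec x) (fun j => x j.1) = x i

/-- `G` has two-sender form for the parts `P1`, `P2`: its rows split into sender-1 rows,
zero on all columns in `P2`, and sender-2 rows, zero on all columns in `P1`. -/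
def TwoSenderForm {ρ ι : Type*} (P1 P2 : Set ι) (G : Matrix ρ ι F) : Prop :=
  ∃ S : Set ρ, (∀ r ∈ S, ∀ j ∈ P2, G r j = 0) ∧ (∀ r ∉ S, ∀ j ∈ P1, G r j = 0)

/-- Achievable lengths of valid weakly secure (single-sender) linear index codes. -/
def oneLens {ι : Type*} [Fintype ι] (K : ι → Set ι) (A : Set ι) : Set ℕ :=
  {l | ∃ G : Matrix (Fin l) ι F, ValidCode F K G ∧ WeaklySecure F G A}

/-- Achievable total lengths of valid weakly secure two-sender linear index codes. -/
def twoLens {ι : Type*} [Fintype ι] (P1 P2 : Set ι) (K : ι → Set ι) (A : Set ι) :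
    Set ℕ :=
  {l | ∃ G : Matrix (Fin l) ι F,
      TwoSenderForm F P1 P2 G ∧ ValidCode F K G ∧ WeaklySecure F G A}

/-- Side-information sets of the sub-instance induced on `S`. -/
def subK {ι : Type*} (K : ι → Set ι) (S : Set ι) : ↥S → Set ↥S :=
  fun i => {j : ↥S | (j : ι) ∈ K (i : ι)}

/-- Extend a matrix with columns indexed by `↥S` to one with columns indexed by `ι`,
filling the new columns with zeros. -/
def extendCols {ρ ι : Type*} (S : Set ι) (G : Matrix ρ ↥S F) : Matrix ρ ι F :=
  Matrix.of fun r => Function.extend (Subtype.val) (G r) (fun _ => 0)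

/-- Zero-pad a matrix with `l` rows to one with `L` rows. -/
def padMat {ι : Type*} (L : ℕ) {l : ℕ} (G : Matrix (Fin l) ι F) : Matrix (Fin L) ι F :=
  Matrix.of fun r j => if h : (r : ℕ) < l then G ⟨(r : ℕ), h⟩ j else 0

/-! Superpose the code for `P12` on the concatenation of the codes for `P1` and `P2`: row `r` is
the `r`-th row of `[G1; G2]` plus the `r`-th row of `G12`, all blocks extended by zero columns. A
`P1`-row plus a `P12`-row vanishes on `P2`, so sender 1 can send it, and symmetrically for
sender 2; hence length `max l12 (l1 + l2)` already suffices.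

A receiver in `P_T` knows every message outside `P_T`, so it removes their contribution from the
rows carrying `G_T` and decodes with `G_T`. As the blocks have pairwise disjoint column supports,
restricting the row space of the combined code to the columns `P_T` lands in the row space of
`G_T`, so a leaking vector `u + e_i` with `i ∈ P_T` would restrict to one leaking through `G_T`. -/

section Append

variable {α ι : Type*} {l₁ l₂ : ℕ}

theorem of_append_castAdd (G : Matrix (Fin l₁) ι α) (H : Matrix (Fin l₂) ι α) (r : Fin l₁) :
    Matrix.of (Fin.append G H) (Fin.castAdd l₂ r) = G r :=
  Fin.append_left G H r

theorem of_append_natAdd (G : Matrix (Fin l₁) ι α) (H : Matrix (Fin l₂) ι α) (r : Fin l₂) :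
    Matrix.of (Fin.append G H) (Fin.natAdd l₁ r) = H r :=
  Fin.append_right G H r

theorem of_append_apply_of_forall_eq_zero [Zero α] {G : Matrix (Fin l₁) ι α}
    {H : Matrix (Fin l₂) ι α} {j : ι} (hG : ∀ r, G r j = 0) (hH : ∀ r, H r j = 0)
    (r : Fin (l₁ + l₂)) : Matrix.of (Fin.append G H) r j = 0 := by
  induction r using Fin.addCases with
  | left r => rw [of_append_castAdd, hG]
  | right r => rw [of_append_natAdd, hH]

end Append

section Blocks

variable {𝕜 : Type*} [Field 𝕜] {ρ ι : Type*}

theorem extendCols_apply_val (S : Set ι) (G : Matrix ρ S 𝕜) (r : ρ) (j : S) :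
    extendCols 𝕜 S G r j = G r j :=
  Subtype.val_injective.extend_apply (G r) (fun _ => 0) j

theorem extendCols_apply_of_notMem {S : Set ι} (G : Matrix ρ S 𝕜) (r : ρ) {j : ι}
    (hj : j ∉ S) : extendCols 𝕜 S G r j = 0 :=
  Function.extend_apply' (G r) (fun _ => 0) j fun ⟨a, ha⟩ => hj (ha ▸ a.2)

theorem extendCols_submatrix_val (S : Set ι) (G : Matrix ρ S 𝕜) :
    (extendCols 𝕜 S G).submatrix id Subtype.val = G := by
  ext r j
  exact extendCols_apply_val S G r j

theorem extendCols_submatrix_of_disjoint {S T : Set ι} (h : Disjoint S T) (G : Matrix ρ S 𝕜) :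
    (extendCols 𝕜 S G).submatrix id (Subtype.val : T → ι) = 0 := by
  ext r j
  exact extendCols_apply_of_notMem G r (h.notMem_of_mem_right j.2)

theorem padMat_castLE {l L : ℕ} (G : Matrix (Fin l) ι 𝕜) (h : l ≤ L) (r : Fin l) :
    padMat 𝕜 L G (Fin.castLE h r) = G r := by
  ext j
  simp [padMat]

theorem padMat_apply_of_forall_eq_zero {l L : ℕ} {G : Matrix (Fin l) ι 𝕜} {j : ι}
    (h : ∀ r, G r j = 0) (r : Fin L) : padMat 𝕜 L G r j = 0 := by
  by_cases hr : (r : ℕ) < l <;> simp [padMat, hr, h]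

theorem rowSpace_zero : rowSpace 𝕜 (0 : Matrix ρ ι 𝕜) = ⊥ := by
  rw [rowSpace, Submodule.span_eq_bot]
  rintro _ ⟨r, rfl⟩
  rfl

theorem rowSpace_add_le (G H : Matrix ρ ι 𝕜) :
    rowSpace 𝕜 (G + H) ≤ rowSpace 𝕜 G ⊔ rowSpace 𝕜 H := by
  rw [rowSpace, Submodule.span_le]
  rintro _ ⟨r, rfl⟩
  exact Submodule.add_mem_sup (Submodule.subset_span ⟨r, rfl⟩) (Submodule.subset_span ⟨r, rfl⟩)

theorem rowSpace_padMat_le {l : ℕ} (L : ℕ) (G : Matrix (Fin l) ι 𝕜) :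
    rowSpace 𝕜 (padMat 𝕜 L G) ≤ rowSpace 𝕜 G := by
  rw [rowSpace, Submodule.span_le]
  rintro _ ⟨r, rfl⟩
  by_cases h : (r : ℕ) < l
  · exact Submodule.subset_span ⟨⟨r, h⟩, by simp [padMat, h]⟩
  · simp only [padMat, of_apply, dif_neg h]
    exact zero_mem _

theorem rowSpace_append_le {l₁ l₂ : ℕ} (G : Matrix (Fin l₁) ι 𝕜) (H : Matrix (Fin l₂) ι 𝕜) :
    rowSpace 𝕜 (Matrix.of (Fin.append G H)) ≤ rowSpace 𝕜 G ⊔ rowSpace 𝕜 H := by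
  rw [rowSpace, Submodule.span_le]
  rintro _ ⟨r, rfl⟩
  induction r using Fin.addCases with
  | left r =>
    exact Submodule.mem_sup_left (Submodule.subset_span ⟨r, (of_append_castAdd G H r).symm⟩)
  | right r =>
    exact Submodule.mem_sup_right (Submodule.subset_span ⟨r, (of_append_natAdd G H r).symm⟩)

theorem rowSpace_submatrix_id {κ : Type*} (G : Matrix ρ ι 𝕜) (f : κ → ι) :
    rowSpace 𝕜 (G.submatrix id f) = (rowSpace 𝕜 G).map (LinearMap.funLeft 𝕜 𝕜 f) := by
  rw [rowSpace, rowSpace, Submodule.map_span, ← Set.range_comp]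
  rfl

theorem map_funLeft_rowSpace_extendCols (S : Set ι) (G : Matrix ρ S 𝕜) :
    (rowSpace 𝕜 (extendCols 𝕜 S G)).map (LinearMap.funLeft 𝕜 𝕜 Subtype.val) = rowSpace 𝕜 G := by
  rw [← rowSpace_submatrix_id, extendCols_submatrix_val]

theorem map_funLeft_rowSpace_extendCols_of_disjoint {S T : Set ι} (h : Disjoint S T)
    (G : Matrix ρ S 𝕜) :
    (rowSpace 𝕜 (extendCols 𝕜 S G)).map (LinearMap.funLeft 𝕜 𝕜 (Subtype.val : T → ι)) = ⊥ := by
  rw [← rowSpace_submatrix_id, extendCols_submatrix_of_disjoint h, rowSpace_zero]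

theorem TwoSenderForm.add {P1 P2 : Set ι} {G H : Matrix ρ ι 𝕜} (hG : TwoSenderForm 𝕜 P1 P2 G)
    (hH : ∀ r, ∀ j ∈ P1 ∪ P2, H r j = 0) : TwoSenderForm 𝕜 P1 P2 (G + H) := by
  obtain ⟨S, hS, hSc⟩ := hG
  refine ⟨S, fun r hr j hj => ?_, fun r hr j hj => ?_⟩
  · simp [hS r hr j hj, hH r j (Or.inr hj)]
  · simp [hSc r hr j hj, hH r j (Or.inl hj)]

theorem TwoSenderForm.padMat {P1 P2 : Set ι} {l : ℕ} (L : ℕ) {G : Matrix (Fin l) ι 𝕜}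
    (hG : TwoSenderForm 𝕜 P1 P2 G) : TwoSenderForm 𝕜 P1 P2 (padMat 𝕜 L G) := by
  obtain ⟨S, hS, hSc⟩ := hG
  refine ⟨{r | ∀ h : (r : ℕ) < l, ⟨r, h⟩ ∈ S}, fun r hr j hj => ?_, fun r hr j hj => ?_⟩
  · by_cases h : (r : ℕ) < l
    · simp [_root_.padMat, h, hS _ (hr h) j hj]
    · simp [_root_.padMat, h]
  · obtain ⟨h, hrS⟩ : ∃ h : (r : ℕ) < l, ⟨r, h⟩ ∉ S := by simpa using hr
    simp [_root_.padMat, h, hSc _ hrS j hj]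

theorem twoSenderForm_append {P1 P2 : Set ι} {l₁ l₂ : ℕ} {G : Matrix (Fin l₁) ι 𝕜}
    {H : Matrix (Fin l₂) ι 𝕜} (hG : ∀ r, ∀ j ∈ P2, G r j = 0) (hH : ∀ r, ∀ j ∈ P1, H r j = 0) :
    TwoSenderForm 𝕜 P1 P2 (Matrix.of (Fin.append G H)) := by
  refine ⟨Set.range (Fin.castAdd l₂), ?_, fun r hr j hj => ?_⟩
  · rintro _ ⟨r, rfl⟩ j hj
    exact (congrFun (of_append_castAdd G H r) j).trans (hG r j hj)
  · induction r using Fin.addCases with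
    | left r => exact absurd ⟨r, rfl⟩ hr
    | right r => exact (congrFun (of_append_natAdd G H r) j).trans (hH r j hj)

theorem exists_decoder_of_submatrix_eq [Fintype ι] {K : ι → Set ι} {S : Set ι} {ρS : Type*}
    {GS : Matrix ρS S 𝕜} (hGS : ValidCode 𝕜 (subK K S) GS) {G : Matrix ρ ι 𝕜} {e : ρS → ρ}
    (hblock : G.submatrix e Subtype.val = GS) {i : ι} (hi : i ∈ S) (hside : ∀ j ∉ S, j ∈ K i) :
    ∃ D : (ρ → 𝕜) → (K i → 𝕜) → 𝕜, ∀ x, D (G *ᵥ x) (fun j => x j) = x i := by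
  obtain ⟨D₀, hD₀⟩ := hGS ⟨i, hi⟩
  refine ⟨fun y s => D₀ (fun t => y (e t) - ∑ j : {j // j ∉ S}, G (e t) j * s ⟨j, hside j j.2⟩)
    (fun j => s ⟨j, j.2⟩), fun x => ?_⟩
  have hsplit : ∀ t, (G *ᵥ x) (e t) - ∑ j : {j // j ∉ S}, G (e t) j * x j =
      (GS *ᵥ fun j => x j) t := by
    intro t
    rw [mulVec, dotProduct, ← Fintype.sum_subtype_add_sum_subtype (· ∈ S), add_sub_cancel_right,
      ← hblock]
    rfl
  simpa only [hsplit] using hD₀ fun j => x j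

theorem add_single_notMem_rowSpace_of_map_le {G : Matrix ρ ι 𝕜} {S : Set ι} {ρS : Type*}
    {GS : Matrix ρS S 𝕜} {A : Set ι} (hGS : WeaklySecure 𝕜 GS (Subtype.val ⁻¹' A))
    (hle : (rowSpace 𝕜 G).map (LinearMap.funLeft 𝕜 𝕜 (Subtype.val : S → ι)) ≤ rowSpace 𝕜 GS)
    {i : ι} (hi : i ∈ S) (hiA : i ∉ A) {u : ι → 𝕜} (hu : ∀ j, u j ≠ 0 → j ∈ A) :
    u + Pi.single i 1 ∉ rowSpace 𝕜 G := fun hmem => by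
  refine hGS ⟨i, hi⟩ hiA (fun j => u j) (fun j hj => hu j hj) ?_
  convert hle ⟨_, hmem, rfl⟩ using 1
  ext j
  simp [Pi.single_apply, Subtype.ext_iff]

end Blocks

section Construction

variable {𝕜 : Type*} [Field 𝕜] {ι : Type*} {P1 P2 P12 : Set ι} {l1 l2 l12 L : ℕ}

noncomputable def stackedCode (L : ℕ) (G1 : Matrix (Fin l1) P1 𝕜) (G2 : Matrix (Fin l2) P2 𝕜)
    (G12 : Matrix (Fin l12) P12 𝕜) : Matrix (Fin L) ι 𝕜 :=
  padMat 𝕜 L (Matrix.of (Fin.append (extendCols 𝕜 P1 G1) (extendCols 𝕜 P2 G2))) +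
    extendCols 𝕜 P12 (padMat 𝕜 L G12)

variable (G1 : Matrix (Fin l1) P1 𝕜) (G2 : Matrix (Fin l2) P2 𝕜) (G12 : Matrix (Fin l12) P12 𝕜)

theorem stackedCode_twoSenderForm (h12 : Disjoint P1 P2) (h112 : Disjoint P1 P12)
    (h212 : Disjoint P2 P12) : TwoSenderForm 𝕜 P1 P2 (stackedCode L G1 G2 G12) := by
  refine ((twoSenderForm_append (fun r j hj => ?_) (fun r j hj => ?_)).padMat L).add ?_
  · exact extendCols_apply_of_notMem G1 r (h12.notMem_of_mem_right hj)
  · exact extendCols_apply_of_notMem G2 r (h12.notMem_of_mem_left hj)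
  · rintro r j (hj | hj)
    · exact extendCols_apply_of_notMem _ r (h112.notMem_of_mem_left hj)
    · exact extendCols_apply_of_notMem _ r (h212.notMem_of_mem_left hj)

theorem stackedCode_submatrix_left (h112 : Disjoint P1 P12) (hL : l1 + l2 ≤ L) :
    (stackedCode L G1 G2 G12).submatrix (fun t => Fin.castLE hL (Fin.castAdd l2 t))
      Subtype.val = G1 := by
  ext t j
  rw [submatrix_apply, stackedCode, Matrix.add_apply, padMat_castLE, of_append_castAdd,
    extendCols_apply_val, extendCols_apply_of_notMem _ _ (h112.notMem_of_mem_left j.2), add_zero]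

theorem stackedCode_submatrix_right (h212 : Disjoint P2 P12) (hL : l1 + l2 ≤ L) :
    (stackedCode L G1 G2 G12).submatrix (fun t => Fin.castLE hL (Fin.natAdd l1 t))
      Subtype.val = G2 := by
  ext t j
  rw [submatrix_apply, stackedCode, Matrix.add_apply, padMat_castLE, of_append_natAdd,
    extendCols_apply_val, extendCols_apply_of_notMem _ _ (h212.notMem_of_mem_left j.2), add_zero]

theorem stackedCode_submatrix_shared (h112 : Disjoint P1 P12) (h212 : Disjoint P2 P12)
    (hL : l12 ≤ L) :
    (stackedCode L G1 G2 G12).submatrix (Fin.castLE hL) Subtype.val = G12 := by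
  ext t j
  rw [submatrix_apply, stackedCode, Matrix.add_apply, extendCols_apply_val, padMat_castLE,
    padMat_apply_of_forall_eq_zero (of_append_apply_of_forall_eq_zero
      (fun r => extendCols_apply_of_notMem G1 r (h112.notMem_of_mem_right j.2))
      (fun r => extendCols_apply_of_notMem G2 r (h212.notMem_of_mem_right j.2))), zero_add]

theorem stackedCode_validCode [Fintype ι] {K : ι → Set ι} (hcov : P1 ∪ P2 ∪ P12 = Set.univ)
    (h112 : Disjoint P1 P12) (h212 : Disjoint P2 P12)
    (hfull1 : ∀ i ∈ P1, ∀ j, j ∉ P1 → j ∈ K i) (hfull2 : ∀ i ∈ P2, ∀ j, j ∉ P2 → j ∈ K i)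
    (hfull12 : ∀ i ∈ P12, ∀ j, j ∉ P12 → j ∈ K i) (hL12 : l12 ≤ L) (hL : l1 + l2 ≤ L)
    (hG1 : ValidCode 𝕜 (subK K P1) G1) (hG2 : ValidCode 𝕜 (subK K P2) G2)
    (hG12 : ValidCode 𝕜 (subK K P12) G12) : ValidCode 𝕜 K (stackedCode L G1 G2 G12) := by
  intro i
  obtain (hi | hi) | hi : i ∈ P1 ∪ P2 ∪ P12 := hcov ▸ Set.mem_univ i
  · exact exists_decoder_of_submatrix_eq hG1 (stackedCode_submatrix_left G1 G2 G12 h112 hL) hi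
      (hfull1 i hi)
  · exact exists_decoder_of_submatrix_eq hG2 (stackedCode_submatrix_right G1 G2 G12 h212 hL) hi
      (hfull2 i hi)
  · exact exists_decoder_of_submatrix_eq hG12
      (stackedCode_submatrix_shared G1 G2 G12 h112 h212 hL12) hi (hfull12 i hi)

theorem rowSpace_stackedCode_le :
    rowSpace 𝕜 (stackedCode L G1 G2 G12) ≤ rowSpace 𝕜 (extendCols 𝕜 P1 G1) ⊔
      rowSpace 𝕜 (extendCols 𝕜 P2 G2) ⊔ rowSpace 𝕜 (extendCols 𝕜 P12 (padMat 𝕜 L G12)) :=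
  (rowSpace_add_le _ _).trans <|
    sup_le_sup_right ((rowSpace_padMat_le L _).trans (rowSpace_append_le _ _)) _

theorem map_funLeft_rowSpace_stackedCode_left (h12 : Disjoint P1 P2) (h112 : Disjoint P1 P12) :
    (rowSpace 𝕜 (stackedCode L G1 G2 G12)).map (LinearMap.funLeft 𝕜 𝕜 (Subtype.val : P1 → ι)) ≤
      rowSpace 𝕜 G1 := by
  refine (Submodule.map_mono (rowSpace_stackedCode_le G1 G2 G12)).trans_eq ?_
  rw [Submodule.map_sup, Submodule.map_sup, map_funLeft_rowSpace_extendCols,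
    map_funLeft_rowSpace_extendCols_of_disjoint h12.symm,
    map_funLeft_rowSpace_extendCols_of_disjoint h112.symm, sup_bot_eq, sup_bot_eq]

theorem map_funLeft_rowSpace_stackedCode_right (h12 : Disjoint P1 P2) (h212 : Disjoint P2 P12) :
    (rowSpace 𝕜 (stackedCode L G1 G2 G12)).map (LinearMap.funLeft 𝕜 𝕜 (Subtype.val : P2 → ι)) ≤
      rowSpace 𝕜 G2 := by
  refine (Submodule.map_mono (rowSpace_stackedCode_le G1 G2 G12)).trans_eq ?_
  rw [Submodule.map_sup, Submodule.map_sup, map_funLeft_rowSpace_extendCols,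
    map_funLeft_rowSpace_extendCols_of_disjoint h12,
    map_funLeft_rowSpace_extendCols_of_disjoint h212.symm, bot_sup_eq, sup_bot_eq]

theorem map_funLeft_rowSpace_stackedCode_shared (h112 : Disjoint P1 P12)
    (h212 : Disjoint P2 P12) :
    (rowSpace 𝕜 (stackedCode L G1 G2 G12)).map (LinearMap.funLeft 𝕜 𝕜 (Subtype.val : P12 → ι)) ≤
      rowSpace 𝕜 G12 := by
  refine (Submodule.map_mono (rowSpace_stackedCode_le G1 G2 G12)).trans ?_
  rw [Submodule.map_sup, Submodule.map_sup, map_funLeft_rowSpace_extendCols,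
    map_funLeft_rowSpace_extendCols_of_disjoint h112,
    map_funLeft_rowSpace_extendCols_of_disjoint h212, bot_sup_eq, bot_sup_eq]
  exact rowSpace_padMat_le L G12

theorem stackedCode_weaklySecure {A : Set ι} (hcov : P1 ∪ P2 ∪ P12 = Set.univ)
    (h12 : Disjoint P1 P2) (h112 : Disjoint P1 P12) (h212 : Disjoint P2 P12)
    (hG1 : WeaklySecure 𝕜 G1 (Subtype.val ⁻¹' A)) (hG2 : WeaklySecure 𝕜 G2 (Subtype.val ⁻¹' A))
    (hG12 : WeaklySecure 𝕜 G12 (Subtype.val ⁻¹' A)) :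
    WeaklySecure 𝕜 (stackedCode L G1 G2 G12) A := by
  intro i hiA u hu
  obtain (hi | hi) | hi : i ∈ P1 ∪ P2 ∪ P12 := hcov ▸ Set.mem_univ i
  · exact add_single_notMem_rowSpace_of_map_le hG1
      (map_funLeft_rowSpace_stackedCode_left G1 G2 G12 h12 h112) hi hiA hu
  · exact add_single_notMem_rowSpace_of_map_le hG2
      (map_funLeft_rowSpace_stackedCode_right G1 G2 G12 h12 h212) hi hiA hu
  · exact add_single_notMem_rowSpace_of_map_le hG12
      (map_funLeft_rowSpace_stackedCode_shared G1 G2 G12 h112 h212) hi hiA hu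

end Construction

theorem mem_twoLens_of_mem_oneLens {𝕜 ι : Type*} [Field 𝕜] [Fintype ι] {P1 P2 P12 : Set ι}
    {K : ι → Set ι} {A : Set ι} {l1 l2 l12 L : ℕ}
    (h12 : Disjoint P1 P2) (h112 : Disjoint P1 P12) (h212 : Disjoint P2 P12)
    (hcov : P1 ∪ P2 ∪ P12 = Set.univ)
    (hfull1 : ∀ i ∈ P1, ∀ j, j ∉ P1 → j ∈ K i) (hfull2 : ∀ i ∈ P2, ∀ j, j ∉ P2 → j ∈ K i)
    (hfull12 : ∀ i ∈ P12, ∀ j, j ∉ P12 → j ∈ K i)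
    (hl1 : l1 ∈ oneLens 𝕜 (subK K P1) (Subtype.val ⁻¹' A))
    (hl2 : l2 ∈ oneLens 𝕜 (subK K P2) (Subtype.val ⁻¹' A))
    (hl12 : l12 ∈ oneLens 𝕜 (subK K P12) (Subtype.val ⁻¹' A))
    (hL12 : l12 ≤ L) (hL : l1 + l2 ≤ L) : L ∈ twoLens 𝕜 P1 P2 K A := by
  obtain ⟨G1, hG1v, hG1s⟩ := hl1
  obtain ⟨G2, hG2v, hG2s⟩ := hl2
  obtain ⟨G12, hG12v, hG12s⟩ := hl12
  exact ⟨stackedCode L G1 G2 G12, stackedCode_twoSenderForm G1 G2 G12 h12 h112 h212,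
    stackedCode_validCode G1 G2 G12 hcov h112 h212 hfull1 hfull2 hfull12 hL12 hL hG1v hG2v hG12v,
    stackedCode_weaklySecure G1 G2 G12 hcov h12 h112 h212 hG1s hG2s hG12s⟩

theorem caseIIE_exists_code {m l1 l2 l12 : ℕ}
    (P1 P2 P12 : Set (Fin m))
    (h12 : Disjoint P1 P2) (h112 : Disjoint P1 P12) (h212 : Disjoint P2 P12)
    (hcov : P1 ∪ P2 ∪ P12 = Set.univ)
    (K : Fin m → Set (Fin m))
    (hfull1 : ∀ i ∈ P1, ∀ j, j ∉ P1 → j ∈ K i)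
    (hfull2 : ∀ i ∈ P2, ∀ j, j ∉ P2 → j ∈ K i)
    (hfull12 : ∀ i ∈ P12, ∀ j, j ∉ P12 → j ∈ K i)
    (A : Set (Fin m))
    (G1 : Matrix (Fin l1) ↥P1 F) (G2 : Matrix (Fin l2) ↥P2 F)
    (G12 : Matrix (Fin l12) ↥P12 F)
    (hG1v : ValidCode F (subK K P1) G1)
    (hG1s : WeaklySecure F G1 (Subtype.val ⁻¹' A))
    (hG2v : ValidCode F (subK K P2) G2)
    (hG2s : WeaklySecure F G2 (Subtype.val ⁻¹' A))
    (hG12v : ValidCode F (subK K P12) G12)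
    (hG12s : WeaklySecure F G12 (Subtype.val ⁻¹' A)) :
    (∃ G : Matrix (Fin (max (l12 + l1) (max (l12 + l2) (l1 + l2)))) (Fin m) F,
        TwoSenderForm F P1 P2 G ∧ ValidCode F K G ∧ WeaklySecure F G A) ∧
    sInf (twoLens F P1 P2 K A) ≤
      max (sInf (oneLens F (subK K P12) (Subtype.val ⁻¹' A)) +
            sInf (oneLens F (subK K P1) (Subtype.val ⁻¹' A)))
        (max (sInf (oneLens F (subK K P12) (Subtype.val ⁻¹' A)) +
              sInf (oneLens F (subK K P2) (Subtype.val ⁻¹' A)))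
          (sInf (oneLens F (subK K P1) (Subtype.val ⁻¹' A)) +
            sInf (oneLens F (subK K P2) (Subtype.val ⁻¹' A)))) := by
  have hmem := @mem_twoLens_of_mem_oneLens F (Fin m) _ _ P1 P2 P12 K A
  refine ⟨hmem (L := max (l12 + l1) (max (l12 + l2) (l1 + l2))) h12 h112 h212 hcov hfull1 hfull2
    hfull12 ⟨G1, hG1v, hG1s⟩ ⟨G2, hG2v, hG2s⟩ ⟨G12, hG12v, hG12s⟩ (by omega) (by omega), ?_⟩
  exact Nat.sInf_le <| hmem h12 h112 h212 hcov hfull1 hfull2 hfull12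
    (Nat.sInf_mem ⟨l1, G1, hG1v, hG1s⟩) (Nat.sInf_mem ⟨l2, G2, hG2v, hG2s⟩)
    (Nat.sInf_mem ⟨l12, G12, hG12v, hG12s⟩) (by omega) (by omega)
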